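/- Let e(g) = Σ_{i=0}^{s} t_i·2^{t_i−1} + Σ_{i=0}^{s} i·2^{t_i} for the binary expansion g = Σ 2^{t_i}. Then for every positive integer g, e(g+1) − e(g) equals the number of ones in the binary representation of g, i.e., the Hamming weight (popcount) of g. -/

import Mathlib

/-- The strictly decreasing list of exponents `t_0 > t_1 > ⋯ > t_s` in the
binary expansion `g = Σ_{i=0}^{s} 2^(t_i)` of `g`. -/
def expList (g : ℕ) : List ℕ :=
  (((Finset.range (g + 1)).filter (fun k => g.testBit k)).sort (· ≤ ·)).reverse

/-- `e g = Σ_{i=0}^{s} t_i·2^(t_i−1) + Σ_{i=0}^{s} i·2^(t_i)` over the binary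
expansion `g = Σ_{i=0}^{s} 2^(t_i)` with `t_0 > t_1 > ⋯ > t_s ≥ 0` (and `e 0 = 0`). -/
def eHL (g : ℕ) : ℕ :=
  ((expList g).zipIdx.map (fun p => p.1 * 2 ^ (p.1 - 1) + p.2 * 2 ^ p.1)).sum

/-! The function `e` agrees with the summatory popcount `s g = ∑_{n<g} popcount n`. Split off the
leading bit, `g = 2^t + r` with `r < 2^t`: the leading term of `e g` is `t·2^(t-1)`, and the other
terms are those of `e r` with every position index raised by one, which adds `∑ 2^(t_i) = r`.
So `e (2^t + r) = t·2^(t-1) + e r + r`. The sum `s` satisfies the same recursion, because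
`s (2^t) = t·2^(t-1)` and `popcount (2^t + n) = popcount n + 1` for `n < 2^t`. Hence `e = s`, and
`e (g+1) - e g = popcount g`. -/

namespace Nat

theorem count_true_bits_eq_length_bitIndices (n : ℕ) :
    n.bits.count true = n.bitIndices.length := by
  induction n using binaryRec with
  | zero => simp
  | bit b n ih =>
    cases b
    · rcases eq_or_ne n 0 with rfl | hn
      · simp
      · simp [bit0_bits n hn, ih]
    · simp [bit1_bits, ih]

theorem bitIndices_two_pow_add {t r : ℕ} (hr : r < 2 ^ t) :
    (2 ^ t + r).bitIndices = r.bitIndices ++ [t] := by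
  have hlt : ∀ a ∈ r.bitIndices, a < t := fun a ha =>
    (pow_lt_pow_iff_right₀ one_lt_two).1 ((two_pow_le_of_mem_bitIndices ha).trans_lt hr)
  have hsorted : (r.bitIndices ++ [t]).SortedLT := by
    rw [List.sortedLT_iff_pairwise, List.pairwise_append]
    exact ⟨bitIndices_sorted.pairwise, by simp, by simpa using hlt⟩
  simpa [add_comm] using bitIndices_sum_map_two_pow hsorted

end Nat

open Nat Finset

theorem expList_eq_reverse_bitIndices (g : ℕ) : expList g = g.bitIndices.reverse := by
  have hfilter : (range (g + 1)).filter (fun k => g.testBit k) = g.bitIndices.toFinset := by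
    ext k
    simp only [mem_filter, mem_range, List.mem_toFinset, mem_bitIndices, and_iff_right_iff_imp]
    exact fun hk => lt_succ_of_lt (Nat.lt_two_pow_self.trans_le (ge_two_pow_of_testBit hk))
  rw [expList, hfilter,
    (List.toFinset_sort _ bitIndices_nodup).2 (bitIndices_sorted.pairwise.imp le_of_lt)]

def eHLFrom (k : ℕ) (L : List ℕ) : ℕ :=
  ((L.zipIdx k).map (fun p => p.1 * 2 ^ (p.1 - 1) + p.2 * 2 ^ p.1)).sum

theorem eHL_eq_eHLFrom (g : ℕ) : eHL g = eHLFrom 0 (expList g) := rfl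

theorem eHLFrom_cons (k a : ℕ) (L : List ℕ) :
    eHLFrom k (a :: L) = a * 2 ^ (a - 1) + k * 2 ^ a + eHLFrom (k + 1) L := by
  simp [eHLFrom, List.zipIdx_cons, add_assoc]

theorem eHLFrom_succ (k : ℕ) (L : List ℕ) :
    eHLFrom (k + 1) L = eHLFrom k L + (L.map (2 ^ ·)).sum := by
  induction L generalizing k with
  | nil => simp [eHLFrom]
  | cons a L ih =>
    rw [eHLFrom_cons, eHLFrom_cons, ih, ih, List.map_cons, List.sum_cons]
    ring

theorem eHL_two_pow_add {t r : ℕ} (hr : r < 2 ^ t) :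
    eHL (2 ^ t + r) = t * 2 ^ (t - 1) + eHL r + r := by
  rw [eHL_eq_eHLFrom, eHL_eq_eHLFrom, expList_eq_reverse_bitIndices,
    expList_eq_reverse_bitIndices, bitIndices_two_pow_add hr, List.reverse_append,
    List.reverse_singleton, List.singleton_append,
    eHLFrom_cons, eHLFrom_succ, List.map_reverse, List.sum_reverse, sum_map_two_pow_bitIndices]
  ring

theorem sum_length_bitIndices_two_pow_add {t r : ℕ} (hr : r ≤ 2 ^ t) :
    ∑ n ∈ range (2 ^ t + r), n.bitIndices.length
      = ∑ n ∈ range (2 ^ t), n.bitIndices.length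
        + ∑ n ∈ range r, n.bitIndices.length + r := by
  have hshift : ∀ n ∈ range r, (2 ^ t + n).bitIndices.length = n.bitIndices.length + 1 :=
    fun n hn => by
      rw [bitIndices_two_pow_add ((mem_range.1 hn).trans_le hr), List.length_append,
        List.length_singleton]
  rw [sum_range_add, sum_congr rfl hshift, sum_add_distrib, sum_const, card_range, smul_eq_mul,
    mul_one, add_assoc]

theorem sum_length_bitIndices_range_two_pow (t : ℕ) :
    ∑ n ∈ range (2 ^ t), n.bitIndices.length = t * 2 ^ (t - 1) := by
  induction t with
  | zero => simp
  | succ t ih =>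
    rw [pow_succ, mul_two, sum_length_bitIndices_two_pow_add le_rfl, ih]
    rcases t with _ | t
    · simp
    · simp only [add_tsub_cancel_right, pow_succ]
      ring

theorem eHL_eq_sum_length_bitIndices (g : ℕ) :
    eHL g = ∑ n ∈ range g, n.bitIndices.length := by
  suffices ∀ t, ∀ g < 2 ^ t, eHL g = ∑ n ∈ range g, n.bitIndices.length from
    this g g Nat.lt_two_pow_self
  intro t
  induction t with
  | zero => simp [eHL, expList]
  | succ t ih =>
    intro g hg
    rcases lt_or_ge g (2 ^ t) with hlt | hge
    · exact ih g hlt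
    obtain ⟨r, rfl⟩ := Nat.exists_eq_add_of_le hge
    have hr : r < 2 ^ t := by rw [pow_succ] at hg; omega
    rw [eHL_two_pow_add hr, sum_length_bitIndices_two_pow_add hr.le,
      sum_length_bitIndices_range_two_pow, ih r hr]

theorem eHL_succ_popcount_general (g : ℕ) :
    eHL (g + 1) = eHL g + (Nat.bits g).count true := by
  rw [eHL_eq_sum_length_bitIndices, eHL_eq_sum_length_bitIndices, sum_range_succ,
    count_true_bits_eq_length_bitIndices]

/-- `e (g+1) − e g` equals the Hamming weight (popcount) of `g`, the number of
ones in the binary representation of `g`. -/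
theorem eHL_succ_popcount (g : ℕ) (hg : 0 < g) :
    eHL (g + 1) = eHL g + (Nat.bits g).count true :=
  eHL_succ_popcount_general g
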